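/- For every signed permutation π of size n, all positive weights w_ρ and w_τ, and every rearrangement model M ∈ {M1, M2, M3, M4, M5, M6}, the weighted sorting distance satisfies d^w_M(π) ≥ min{w_ρ/2, w_τ/3} · b(π). -/

import Mathlib

/-- The four kinds of rearrangement operations considered:
reversals, transpositions, inverse transpositions and revrevs. -/
inductive RearrOp : Type
  | rev
  | transp
  | invtransp
  | revrev
deriving DecidableEq

/-- `π` is (the extended version of) a signed permutation of size `n`:
`π 0 = +0`, `π (n+1) = +(n+1)`, and on positions `1, …, n` the values have pairwise
distinct absolute values lying in `{1, …, n}`. -/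
def IsSPerm (n : ℕ) (π : ℕ → ℤ) : Prop :=
  π 0 = 0 ∧ π (n + 1) = (n : ℤ) + 1 ∧
  (∀ i : ℕ, 1 ≤ i → i ≤ n → 1 ≤ |π i| ∧ |π i| ≤ (n : ℤ)) ∧
  (∀ i j : ℕ, 1 ≤ i → i ≤ n → 1 ≤ j → j ≤ n → |π i| = |π j| → i = j)

/-- `π` is (the extended version of) an unsigned permutation of size `n`. -/
def IsUPerm (n : ℕ) (π : ℕ → ℕ) : Prop :=
  π 0 = 0 ∧ π (n + 1) = n + 1 ∧
  (∀ i : ℕ, 1 ≤ i → i ≤ n → 1 ≤ π i ∧ π i ≤ n) ∧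
  (∀ i j : ℕ, 1 ≤ i → i ≤ n → 1 ≤ j → j ≤ n → π i = π j → i = j)

/-- Signed reversal `ρ(i,j)`, `1 ≤ i ≤ j ≤ n`: replaces `(π_i … π_j)` by `(−π_j … −π_i)`. -/
def SRev (n : ℕ) (π π' : ℕ → ℤ) : Prop :=
  ∃ i j : ℕ, 1 ≤ i ∧ i ≤ j ∧ j ≤ n ∧
    (∀ p : ℕ, i ≤ p → p ≤ j → π' p = - π (i + j - p)) ∧
    (∀ p : ℕ, p < i ∨ j < p → π' p = π p)

/-- Transposition `τ(i,j,k)`, `1 ≤ i < j < k ≤ n+1`: exchanges the adjacent segments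
`(π_i … π_{j−1})` and `(π_j … π_{k−1})`. -/
def STransp (n : ℕ) (π π' : ℕ → ℤ) : Prop :=
  ∃ i j k : ℕ, 1 ≤ i ∧ i < j ∧ j < k ∧ k ≤ n + 1 ∧
    (∀ p : ℕ, i ≤ p → p < i + (k - j) → π' p = π (p + (j - i))) ∧
    (∀ p : ℕ, i + (k - j) ≤ p → p < k → π' p = π (p - (k - j))) ∧
    (∀ p : ℕ, p < i ∨ k ≤ p → π' p = π p)

/-- Signed inverse transposition (type 1 or type 2): exchanges the two adjacent segments
`(π_i … π_{j−1})` and `(π_j … π_{k−1})` and additionally reverses (and negates) one of them. -/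
def SInvTransp (n : ℕ) (π π' : ℕ → ℤ) : Prop :=
  ∃ i j k : ℕ, 1 ≤ i ∧ i < j ∧ j < k ∧ k ≤ n + 1 ∧
    (((∀ p : ℕ, i ≤ p → p < i + (k - j) → π' p = π (p + (j - i))) ∧
      (∀ p : ℕ, i + (k - j) ≤ p → p < k → π' p = - π (i + k - 1 - p))) ∨
     ((∀ p : ℕ, i ≤ p → p < i + (k - j) → π' p = - π (i + k - 1 - p)) ∧
      (∀ p : ℕ, i + (k - j) ≤ p → p < k → π' p = π (p - (k - j))))) ∧
    (∀ p : ℕ, p < i ∨ k ≤ p → π' p = π p)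

/-- Signed revrev `ρρ(i,j,k)`: reverses (and negates) each of the two adjacent segments
`(π_i … π_{j−1})` and `(π_j … π_{k−1})` in place, without exchanging them. -/
def SRevRev (n : ℕ) (π π' : ℕ → ℤ) : Prop :=
  ∃ i j k : ℕ, 1 ≤ i ∧ i < j ∧ j < k ∧ k ≤ n + 1 ∧
    (∀ p : ℕ, i ≤ p → p < j → π' p = - π (i + j - 1 - p)) ∧
    (∀ p : ℕ, j ≤ p → p < k → π' p = - π (j + k - 1 - p)) ∧
    (∀ p : ℕ, p < i ∨ k ≤ p → π' p = π p)

/-- Unsigned reversal `ρ(i,j)`. -/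
def URev (n : ℕ) (π π' : ℕ → ℕ) : Prop :=
  ∃ i j : ℕ, 1 ≤ i ∧ i ≤ j ∧ j ≤ n ∧
    (∀ p : ℕ, i ≤ p → p ≤ j → π' p = π (i + j - p)) ∧
    (∀ p : ℕ, p < i ∨ j < p → π' p = π p)

/-- Unsigned transposition `τ(i,j,k)`. -/
def UTransp (n : ℕ) (π π' : ℕ → ℕ) : Prop :=
  ∃ i j k : ℕ, 1 ≤ i ∧ i < j ∧ j < k ∧ k ≤ n + 1 ∧
    (∀ p : ℕ, i ≤ p → p < i + (k - j) → π' p = π (p + (j - i))) ∧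
    (∀ p : ℕ, i + (k - j) ≤ p → p < k → π' p = π (p - (k - j))) ∧
    (∀ p : ℕ, p < i ∨ k ≤ p → π' p = π p)

/-- Unsigned inverse transposition (type 1 or type 2). -/
def UInvTransp (n : ℕ) (π π' : ℕ → ℕ) : Prop :=
  ∃ i j k : ℕ, 1 ≤ i ∧ i < j ∧ j < k ∧ k ≤ n + 1 ∧
    (((∀ p : ℕ, i ≤ p → p < i + (k - j) → π' p = π (p + (j - i))) ∧
      (∀ p : ℕ, i + (k - j) ≤ p → p < k → π' p = π (i + k - 1 - p))) ∨
     ((∀ p : ℕ, i ≤ p → p < i + (k - j) → π' p = π (i + k - 1 - p)) ∧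
      (∀ p : ℕ, i + (k - j) ≤ p → p < k → π' p = π (p - (k - j))))) ∧
    (∀ p : ℕ, p < i ∨ k ≤ p → π' p = π p)

/-- Unsigned revrev `ρρ(i,j,k)`. -/
def URevRev (n : ℕ) (π π' : ℕ → ℕ) : Prop :=
  ∃ i j k : ℕ, 1 ≤ i ∧ i < j ∧ j < k ∧ k ≤ n + 1 ∧
    (∀ p : ℕ, i ≤ p → p < j → π' p = π (i + j - 1 - p)) ∧
    (∀ p : ℕ, j ≤ p → p < k → π' p = π (j + k - 1 - p)) ∧
    (∀ p : ℕ, p < i ∨ k ≤ p → π' p = π p)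

def sOpRel (n : ℕ) : RearrOp → (ℕ → ℤ) → (ℕ → ℤ) → Prop
  | RearrOp.rev => SRev n
  | RearrOp.transp => STransp n
  | RearrOp.invtransp => SInvTransp n
  | RearrOp.revrev => SRevRev n

def uOpRel (n : ℕ) : RearrOp → (ℕ → ℕ) → (ℕ → ℕ) → Prop
  | RearrOp.rev => URev n
  | RearrOp.transp => UTransp n
  | RearrOp.invtransp => UInvTransp n
  | RearrOp.revrev => URevRev n

/-- The list of operations `l` transforms the signed permutation `π` into the identity. -/
def SSorts (n : ℕ) : List RearrOp → (ℕ → ℤ) → Prop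
  | [], π => ∀ p : ℕ, p ≤ n + 1 → π p = (p : ℤ)
  | op :: l, π => ∃ π' : ℕ → ℤ, sOpRel n op π π' ∧ SSorts n l π'

/-- The list of operations `l` transforms the unsigned permutation `π` into the identity. -/
def USorts (n : ℕ) : List RearrOp → (ℕ → ℕ) → Prop
  | [], π => ∀ p : ℕ, p ≤ n + 1 → π p = p
  | op :: l, π => ∃ π' : ℕ → ℕ, uOpRel n op π π' ∧ USorts n l π'

/-- A sequence of `s` (unsigned) transpositions transforms `π` into the identity. -/
def UTranspSorts (n : ℕ) : ℕ → (ℕ → ℕ) → Prop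
  | 0, π => ∀ p : ℕ, p ≤ n + 1 → π p = p
  | s + 1, π => ∃ π' : ℕ → ℕ, UTransp n π π' ∧ UTranspSorts n s π'

/-- The cost of an operation: `wr` for a reversal, `wt` for a transposition,
inverse transposition or revrev. -/
noncomputable def opCost (wr wt : ℝ) (op : RearrOp) : ENNReal :=
  if op = RearrOp.rev then ENNReal.ofReal wr else ENNReal.ofReal wt

/-- The total cost of a sequence of operations. -/
noncomputable def seqCost (wr wt : ℝ) (l : List RearrOp) : ENNReal :=
  (l.map (opCost wr wt)).sum

/-- The weighted distance `d^w_M(π)` for a signed permutation `π`: the minimum total cost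
of a sequence of operations from the model `M` transforming `π` into the identity
(`∞` if no such sequence exists). -/
noncomputable def sWDist (n : ℕ) (M : Set RearrOp) (wr wt : ℝ) (π : ℕ → ℤ) : ENNReal :=
  sInf {c : ENNReal |
    ∃ l : List RearrOp, (∀ op ∈ l, op ∈ M) ∧ SSorts n l π ∧ c = seqCost wr wt l}

/-- The weighted distance `d^w_M(π)` for an unsigned permutation `π`. -/
noncomputable def uWDist (n : ℕ) (M : Set RearrOp) (wr wt : ℝ) (π : ℕ → ℕ) : ENNReal :=
  sInf {c : ENNReal |
    ∃ l : List RearrOp, (∀ op ∈ l, op ∈ M) ∧ USorts n l π ∧ c = seqCost wr wt l}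

/-- `b(π)`: number of (signed) breakpoints of the signed permutation `π`. -/
def bS (n : ℕ) (π : ℕ → ℤ) : ℕ :=
  ((Finset.range (n + 1)).filter (fun i => π (i + 1) - π i ≠ 1)).card

/-- `b(π)`: number of unsigned-reversal breakpoints, i.e. pairs with `|π_{i+1} − π_i| ≠ 1`. -/
def bU (n : ℕ) (π : ℕ → ℕ) : ℕ :=
  ((Finset.range (n + 1)).filter
    (fun i => ¬ (π (i + 1) = π i + 1 ∨ π i = π (i + 1) + 1))).card

/-- `b_τ(π)`: number of transposition breakpoints, i.e. pairs with `π_{i+1} − π_i ≠ 1`. -/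
def bTU (n : ℕ) (π : ℕ → ℕ) : ℕ :=
  ((Finset.range (n + 1)).filter (fun i => π (i + 1) ≠ π i + 1)).card

def M1 : Set RearrOp := {RearrOp.transp, RearrOp.invtransp}
def M2 : Set RearrOp := {RearrOp.rev, RearrOp.transp, RearrOp.invtransp}
def M3 : Set RearrOp := {RearrOp.transp, RearrOp.revrev}
def M4 : Set RearrOp := {RearrOp.rev, RearrOp.transp, RearrOp.revrev}
def M5 : Set RearrOp := {RearrOp.transp, RearrOp.invtransp, RearrOp.revrev}
def M6 : Set RearrOp := {RearrOp.rev, RearrOp.transp, RearrOp.invtransp, RearrOp.revrev}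

/-!
Call `π_{q+1} − π_q` the gap of `π` at `q`; the breakpoints are the positions whose gap is
not `1`. An operation cuts the result at two positions (a reversal) or three (any other
operation), and every other position of the result carries the gap of a distinct position of
the original permutation: a moved segment keeps its gaps, and a segment read backwards with its
signs flipped keeps them too. So an operation removes at most 2 resp. 3 breakpoints, at cost
`w_ρ` resp. `w_τ`, i.e. at least `min{w_ρ/2, w_τ/3}` per breakpoint, and the identity has none.
-/

open Finset

def gap (π : ℕ → ℤ) (q : ℕ) : ℤ := π (q + 1) - π q

section Gap

variable {π π' : ℕ → ℤ} {a b q : ℕ}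

lemma gap_eq_of_shift {d : ℕ} (h : ∀ p, a ≤ p → p < b → π' p = π (p + d))
    (hq : a ≤ q) (hqb : q + 1 < b) : gap π' q = gap π (q + d) := by
  rw [gap, gap, h q hq (by omega), h (q + 1) (by omega) hqb, Nat.add_right_comm]

lemma gap_eq_of_unshift {d : ℕ} (h : ∀ p, a ≤ p → p < b → π' p = π (p - d)) (hd : d ≤ a)
    (hq : a ≤ q) (hqb : q + 1 < b) : gap π' q = gap π (q - d) := by
  rw [gap, gap, h q hq (by omega), h (q + 1) (by omega) hqb, show q + 1 - d = q - d + 1 by omega]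

lemma gap_eq_of_reflect {s : ℕ} (h : ∀ p, a ≤ p → p < b → π' p = -π (s - p)) (hbs : b ≤ s + 1)
    (hq : a ≤ q) (hqb : q + 1 < b) : gap π' q = gap π (s - 1 - q) := by
  rw [gap, gap, h q hq (by omega), h (q + 1) (by omega) hqb, show s - q = s - 1 - q + 1 by omega,
    show s - (q + 1) = s - 1 - q by omega]
  ring

lemma gap_eq_of_fixed (h : ∀ p, p < a ∨ b ≤ p → π' p = π p) (hq : q + 1 < a ∨ b ≤ q) :
    gap π' q = gap π q := by
  rw [gap, gap, h q (by omega), h (q + 1) (by omega)]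

end Gap

lemma bS_add_card_filter_gap_eq_one (n : ℕ) (π : ℕ → ℤ) :
    bS n π + #{q ∈ range (n + 1) | gap π q = 1} = n + 1 := by
  rw [add_comm]
  exact (card_filter_add_card_filter_not (s := range (n + 1)) (gap π · = 1)).trans (card_range _)

lemma bS_eq_zero_of_sorted {n : ℕ} {π : ℕ → ℤ} (h : ∀ p, p ≤ n + 1 → π p = p) : bS n π = 0 := by
  rw [bS, card_eq_zero, filter_eq_empty_iff]
  intro q hq
  rw [mem_range] at hq
  simp [h (q + 1) (by omega), h q (by omega)]

lemma bS_le_bS_add_card {n : ℕ} {π π' : ℕ → ℤ} (E : Finset ℕ) (g : ℕ → ℕ)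
    (hg : ∀ q ≤ n, q ∉ E → g q ≤ n ∧ gap π' q = gap π (g q))
    (hinj : Set.InjOn g {q | q ≤ n ∧ q ∉ E}) :
    bS n π ≤ bS n π' + #E := by
  set A := fun σ : ℕ → ℤ => {q ∈ range (n + 1) | gap σ q = 1}
  have hmem : ∀ q ∈ A π' \ E, q ≤ n ∧ q ∉ E ∧ gap π' q = 1 := by
    intro q hq
    simp only [A, mem_sdiff, mem_filter, mem_range] at hq
    exact ⟨by omega, hq.2, hq.1.2⟩
  have hmaps : Set.MapsTo g (A π' \ E : Finset ℕ) (A π) := by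
    intro q hq
    obtain ⟨hqn, hqE, hq1⟩ := hmem q hq
    obtain ⟨hgn, hgap⟩ := hg q hqn hqE
    exact mem_filter.2 ⟨mem_range.2 (by omega), hgap ▸ hq1⟩
  have hadj : #(A π') ≤ #(A π) + #E :=
    calc #(A π') ≤ #(A π' \ E) + #E := card_le_card_sdiff_add_card
      _ ≤ #(A π) + #E := Nat.add_le_add_right (card_le_card_of_injOn g hmaps
          (hinj.mono fun q hq => show q ≤ n ∧ q ∉ E from ⟨(hmem q hq).1, (hmem q hq).2.1⟩)) _
  have hcount : bS n π + #(A π) = n + 1 := bS_add_card_filter_gap_eq_one n π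
  have hcount' : bS n π' + #(A π') = n + 1 := bS_add_card_filter_gap_eq_one n π'
  omega

section Operations

variable {n : ℕ} {π π' : ℕ → ℤ}

lemma SRev.bS_le_bS_add_two (h : SRev n π π') : bS n π ≤ bS n π' + 2 := by
  obtain ⟨i, j, hi, hij, hj, hA, hC⟩ := h
  refine (bS_le_bS_add_card {i - 1, j}
    (fun q => if i ≤ q ∧ q < j then i + j - 1 - q else q) ?_ ?_).trans
    (Nat.add_le_add_left card_le_two _)
  · intro q hq hqE
    simp only [mem_insert, mem_singleton, not_or] at hqE
    split_ifs with h₁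
    · exact ⟨by omega, gap_eq_of_reflect (b := j + 1) (fun p hp hp' => hA p hp (by omega))
        (by omega) h₁.1 (by omega)⟩
    · exact ⟨hq, gap_eq_of_fixed (a := i) (b := j + 1) (fun p hp => hC p (by omega)) (by omega)⟩
  · rintro a ⟨ha, haE⟩ b ⟨hb, hbE⟩ hab
    simp only [mem_insert, mem_singleton, not_or] at haE hbE hab
    split_ifs at hab <;> omega

lemma STransp.bS_le_bS_add_three (h : STransp n π π') : bS n π ≤ bS n π' + 3 := by
  obtain ⟨i, j, k, hi, hij, hjk, hk, hA, hB, hC⟩ := h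
  refine (bS_le_bS_add_card {i - 1, i + (k - j) - 1, k - 1}
    (fun q => if i ≤ q ∧ q + 1 < i + (k - j) then q + (j - i)
      else if i + (k - j) ≤ q ∧ q + 1 < k then q - (k - j) else q) ?_ ?_).trans
    (Nat.add_le_add_left card_le_three _)
  · intro q hq hqE
    simp only [mem_insert, mem_singleton, not_or] at hqE
    split_ifs with h₁ h₂
    · exact ⟨by omega, gap_eq_of_shift hA h₁.1 h₁.2⟩
    · exact ⟨by omega, gap_eq_of_unshift hB (by omega) h₂.1 h₂.2⟩
    · exact ⟨hq, gap_eq_of_fixed hC (by omega)⟩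
  · rintro a ⟨ha, haE⟩ b ⟨hb, hbE⟩ hab
    simp only [mem_insert, mem_singleton, not_or] at haE hbE hab
    split_ifs at hab <;> omega

lemma SInvTransp.bS_le_bS_add_three (h : SInvTransp n π π') : bS n π ≤ bS n π' + 3 := by
  obtain ⟨i, j, k, hi, hij, hjk, hk, ⟨hA, hB⟩ | ⟨hA, hB⟩, hC⟩ := h
  · refine (bS_le_bS_add_card {i - 1, i + (k - j) - 1, k - 1}
      (fun q => if i ≤ q ∧ q + 1 < i + (k - j) then q + (j - i)
        else if i + (k - j) ≤ q ∧ q + 1 < k then i + k - 1 - 1 - q else q) ?_ ?_).trans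
      (Nat.add_le_add_left card_le_three _)
    · intro q hq hqE
      simp only [mem_insert, mem_singleton, not_or] at hqE
      split_ifs with h₁ h₂
      · exact ⟨by omega, gap_eq_of_shift hA h₁.1 h₁.2⟩
      · exact ⟨by omega, gap_eq_of_reflect hB (by omega) h₂.1 h₂.2⟩
      · exact ⟨hq, gap_eq_of_fixed hC (by omega)⟩
    · rintro a ⟨ha, haE⟩ b ⟨hb, hbE⟩ hab
      simp only [mem_insert, mem_singleton, not_or] at haE hbE hab
      split_ifs at hab <;> omega
  · refine (bS_le_bS_add_card {i - 1, i + (k - j) - 1, k - 1}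
      (fun q => if i ≤ q ∧ q + 1 < i + (k - j) then i + k - 1 - 1 - q
        else if i + (k - j) ≤ q ∧ q + 1 < k then q - (k - j) else q) ?_ ?_).trans
      (Nat.add_le_add_left card_le_three _)
    · intro q hq hqE
      simp only [mem_insert, mem_singleton, not_or] at hqE
      split_ifs with h₁ h₂
      · exact ⟨by omega, gap_eq_of_reflect hA (by omega) h₁.1 h₁.2⟩
      · exact ⟨by omega, gap_eq_of_unshift hB (by omega) h₂.1 h₂.2⟩
      · exact ⟨hq, gap_eq_of_fixed hC (by omega)⟩
    · rintro a ⟨ha, haE⟩ b ⟨hb, hbE⟩ hab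
      simp only [mem_insert, mem_singleton, not_or] at haE hbE hab
      split_ifs at hab <;> omega

lemma SRevRev.bS_le_bS_add_three (h : SRevRev n π π') : bS n π ≤ bS n π' + 3 := by
  obtain ⟨i, j, k, hi, hij, hjk, hk, hA, hB, hC⟩ := h
  refine (bS_le_bS_add_card {i - 1, j - 1, k - 1}
    (fun q => if i ≤ q ∧ q + 1 < j then i + j - 1 - 1 - q
      else if j ≤ q ∧ q + 1 < k then j + k - 1 - 1 - q else q) ?_ ?_).trans
    (Nat.add_le_add_left card_le_three _)
  · intro q hq hqE
    simp only [mem_insert, mem_singleton, not_or] at hqE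
    split_ifs with h₁ h₂
    · exact ⟨by omega, gap_eq_of_reflect hA (by omega) h₁.1 h₁.2⟩
    · exact ⟨by omega, gap_eq_of_reflect hB (by omega) h₂.1 h₂.2⟩
    · exact ⟨hq, gap_eq_of_fixed hC (by omega)⟩
  · rintro a ⟨ha, haE⟩ b ⟨hb, hbE⟩ hab
    simp only [mem_insert, mem_singleton, not_or] at haE hbE hab
    split_ifs at hab <;> omega

end Operations

def RearrOp.numCuts : RearrOp → ℕ
  | .rev => 2
  | _ => 3

lemma bS_le_bS_add_numCuts {n : ℕ} {op : RearrOp} {π π' : ℕ → ℤ} (h : sOpRel n op π π') :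
    bS n π ≤ bS n π' + op.numCuts := by
  cases op
  exacts [SRev.bS_le_bS_add_two h, STransp.bS_le_bS_add_three h,
    SInvTransp.bS_le_bS_add_three h, SRevRev.bS_le_bS_add_three h]

lemma ofReal_min_mul_numCuts_le_opCost (wr wt : ℝ) (op : RearrOp) :
    ENNReal.ofReal (min (wr / 2) (wt / 3)) * op.numCuts ≤ opCost wr wt op := by
  have h₂ := min_le_left (wr / 2) (wt / 3)
  have h₃ := min_le_right (wr / 2) (wt / 3)
  rw [← ENNReal.ofReal_natCast, ← ENNReal.ofReal_mul' (Nat.cast_nonneg _)]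
  cases op <;> refine ENNReal.ofReal_le_ofReal ?_ <;> simp only [RearrOp.numCuts] <;> push_cast <;>
    linarith

lemma SSorts.ofReal_min_mul_bS_le_seqCost {n : ℕ} {l : List RearrOp} {π : ℕ → ℤ}
    (h : SSorts n l π) (wr wt : ℝ) :
    ENNReal.ofReal (min (wr / 2) (wt / 3)) * bS n π ≤ seqCost wr wt l := by
  induction l generalizing π with
  | nil => simp [bS_eq_zero_of_sorted h]
  | cons op l ih =>
    obtain ⟨π', hop, hl⟩ := h
    set c := ENNReal.ofReal (min (wr / 2) (wt / 3))
    calc c * bS n π ≤ c * (bS n π' + op.numCuts) := by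
          gcongr
          exact_mod_cast bS_le_bS_add_numCuts hop
      _ = c * bS n π' + c * op.numCuts := mul_add _ _ _
      _ ≤ seqCost wr wt l + opCost wr wt op :=
          add_le_add (ih hl) (ofReal_min_mul_numCuts_le_opCost wr wt op)
      _ = seqCost wr wt (op :: l) := by simp [seqCost, add_comm]

theorem weighted_signed_breakpoint_lower_bound_general
    (n : ℕ) (π : ℕ → ℤ)
    (wr wt : ℝ)
    (M : Set RearrOp) :
    ENNReal.ofReal (min (wr / 2) (wt / 3) * (bS n π : ℝ)) ≤ sWDist n M wr wt π := by
  rw [ENNReal.ofReal_mul' (Nat.cast_nonneg _), ENNReal.ofReal_natCast]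
  exact le_sInf fun _ ⟨_, _, hl, hc⟩ => hc ▸ hl.ofReal_min_mul_bS_le_seqCost wr wt

/-- For every signed permutation `π` of size `n`, all positive weights
`w_ρ` and `w_τ`, and every rearrangement model `M ∈ {M1, …, M6}`, the weighted sorting
distance satisfies `d^w_M(π) ≥ min{w_ρ/2, w_τ/3} · b(π)`. -/
theorem weighted_signed_breakpoint_lower_bound
    (n : ℕ) (π : ℕ → ℤ) (hπ : IsSPerm n π)
    (wr wt : ℝ) (hwr : 0 < wr) (hwt : 0 < wt)
    (M : Set RearrOp)
    (hM : M = M1 ∨ M = M2 ∨ M = M3 ∨ M = M4 ∨ M = M5 ∨ M = M6) :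
    ENNReal.ofReal (min (wr / 2) (wt / 3) * (bS n π : ℝ)) ≤ sWDist n M wr wt π :=
  weighted_signed_breakpoint_lower_bound_general n π wr wt M
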